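/- Let J, K be positive integers, let Q be a J×K real matrix with entries q_{jk}, and let G be a J×K random matrix whose entries g_{jk} are i.i.d. complex random variables with mean zero and E|g_{jk}|² = 1 (e.g., standard complex Gaussians CN(0,1)). For a real J×J matrix T̃, define Δ = Q∘G − T̃G (where ∘ denotes the Hadamard, i.e., entrywise, product) and F(T̃) = E(‖Δ‖_F²), the expected squared Frobenius norm. Then F(T̃) attains its minimum over all real J×J matrices T̃ if and only if T̃ is the diagonal matrix whose j-th diagonal entry equals (1/K)·Σ_{k=1}^{K} q_{jk}, and the minimum value is F_min = Σ_{j=1}^{J} [ Σ_{k=1}^{K} q_{jk}² − (1/K)(Σ_{k=1}^{K} q_{jk})² ]. -/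

import Mathlib

open MeasureTheory ProbabilityTheory ComplexConjugate

/-!
The columns of `Δ = Q∘G − T̃G` are `(diag(Q_{·k}) − T̃) G_{·k}`, and the entries of a column of `G`
are orthonormal in `L²` (mean zero, unit second moment, independent). Hence
`F(T̃) = ∑_k ‖diag(Q_{·k}) − T̃‖_F²`, and the variance decomposition around the mean `D` of the
matrices `diag(Q_{·k})` gives `F(T̃) = F_min + K ‖T̃ − D‖_F²`.
-/

section Orthonormal

variable {Ω ι : Type*} [MeasurableSpace Ω] {μ : Measure Ω}

lemma integral_norm_sq_sum_mul_of_orthonormal [Fintype ι] {X : ι → Ω → ℂ}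
    (hX : ∀ n, MemLp (X n) 2 μ) (hnorm : ∀ n, ∫ ω, ‖X n ω‖ ^ 2 ∂μ = 1)
    (horth : Pairwise fun m n => ∫ ω, X m ω * conj (X n ω) ∂μ = 0) (c : ι → ℂ) :
    ∫ ω, ‖∑ n, c n * X n ω‖ ^ 2 ∂μ = ∑ n, ‖c n‖ ^ 2 := by
  have hint : ∀ m n, Integrable (fun ω => c m * conj (c n) * (X m ω * conj (X n ω))) μ :=
    fun m n => ((hX m).integrable_mul (hX n).star).const_mul _
  apply Complex.ofReal_injective
  rw [← integral_complex_ofReal]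
  calc ∫ ω, ((‖∑ n, c n * X n ω‖ ^ 2 : ℝ) : ℂ) ∂μ
      = ∫ ω, ∑ m, ∑ n, c m * conj (c n) * (X m ω * conj (X n ω)) ∂μ := by
        congr with ω
        rw [Complex.ofReal_pow, ← Complex.mul_conj', map_sum, Finset.sum_mul_sum]
        simp only [map_mul]
        exact Finset.sum_congr rfl fun m _ => Finset.sum_congr rfl fun n _ => by ring
    _ = ∑ m, ∑ n, c m * conj (c n) * ∫ ω, X m ω * conj (X n ω) ∂μ := by
        rw [integral_finsetSum _ fun m _ => integrable_finsetSum _ fun n _ => hint m n]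
        simp only [integral_finsetSum _ fun n _ => hint _ n, integral_const_mul]
    _ = ∑ n, c n * conj (c n) * ∫ ω, X n ω * conj (X n ω) ∂μ := by
        refine Finset.sum_congr rfl fun m _ => Finset.sum_eq_single m (fun n _ hnm => ?_) (by simp)
        rw [horth (Ne.symm hnm), mul_zero]
    _ = ((∑ n, ‖c n‖ ^ 2 : ℝ) : ℂ) := by
        simp [Complex.mul_conj', ← Complex.ofReal_pow, integral_complex_ofReal, hnorm]

lemma integral_mul_conj_eq_zero_of_indepFun {X Y : Ω → ℂ} (hXY : X ⟂ᵢ[μ] Y)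
    (hX : AEStronglyMeasurable X μ) (hY : AEStronglyMeasurable Y μ) (hmean : ∫ ω, X ω ∂μ = 0) :
    ∫ ω, X ω * conj (Y ω) ∂μ = 0 := by
  have hXY' : X ⟂ᵢ[μ] fun ω => conj (Y ω) :=
    hXY.comp measurable_id Complex.continuous_conj.measurable
  rw [hXY'.integral_fun_mul_eq_mul_integral hX
    (Complex.continuous_conj.comp_aestronglyMeasurable hY), hmean, zero_mul]

lemma memLp_two_of_integral_norm_sq_ne_zero {E : Type*} [NormedAddCommGroup E] {f : Ω → E}
    (hf : AEStronglyMeasurable f μ) (h : ∫ ω, ‖f ω‖ ^ 2 ∂μ ≠ 0) : MemLp f 2 μ :=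
  (memLp_two_iff_integrable_sq_norm hf).2 (Integrable.of_integral_ne_zero h)

end Orthonormal

lemma sum_sub_sq_eq_add_card_mul {κ : Type*} [Fintype κ] [Nonempty κ] (a : κ → ℝ) (x : ℝ) :
    ∑ k, (a k - x) ^ 2 = (∑ k, a k ^ 2 - (∑ k, a k) ^ 2 / Fintype.card κ)
      + Fintype.card κ * (x - (∑ k, a k) / Fintype.card κ) ^ 2 := by
  have hK : (Fintype.card κ : ℝ) ≠ 0 := by positivity
  simp only [sub_sq, Finset.sum_add_distrib, Finset.sum_sub_distrib, ← Finset.sum_mul,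
    ← Finset.mul_sum, Finset.sum_const, Finset.card_univ, nsmul_eq_mul]
  field_simp
  ring

section Matrix

variable {ι κ : Type*} [Fintype ι] [DecidableEq ι] [Fintype κ] [Nonempty κ]

lemma sum_sq_diagonal_sub_eq (Q : Matrix ι κ ℝ) (T : Matrix ι ι ℝ) :
    ∑ j, ∑ k, ∑ n, (Matrix.diagonal (fun i => Q i k) j n - T j n) ^ 2
      = ∑ j, (∑ k, Q j k ^ 2 - (1 / (Fintype.card κ : ℝ)) * (∑ k, Q j k) ^ 2)
        + Fintype.card κ * ∑ j, ∑ n,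
          (T j n - Matrix.diagonal (fun j => (1 / (Fintype.card κ : ℝ)) * ∑ k, Q j k) j n) ^ 2 := by
  have entry : ∀ j n, ∑ k, (Matrix.diagonal (fun i => Q i k) j n - T j n) ^ 2
      = (if j = n then ∑ k, Q j k ^ 2 - (1 / (Fintype.card κ : ℝ)) * (∑ k, Q j k) ^ 2 else 0)
        + Fintype.card κ *
          (T j n - Matrix.diagonal (fun j => (1 / (Fintype.card κ : ℝ)) * ∑ k, Q j k) j n) ^ 2 := by
    intro j n
    rcases eq_or_ne j n with rfl | hjn
    · simp only [Matrix.diagonal_apply_eq, if_true, sum_sub_sq_eq_add_card_mul]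
      ring
    · simp [hjn]
  simp_rw [Finset.sum_comm (γ := κ), entry, Finset.sum_add_distrib, Finset.sum_ite_eq,
    Finset.mem_univ, if_true, Finset.mul_sum]

end Matrix

lemma Matrix.forall_le_iff_eq_of_eq_add_mul_sum_sq {m n : Type*} [Fintype m] [Fintype n]
    {f : Matrix m n ℝ → ℝ} {C a : ℝ} (ha : 0 < a) {M₀ : Matrix m n ℝ}
    (hf : ∀ M, f M = C + a * ∑ i, ∑ j, (M i j - M₀ i j) ^ 2) (M : Matrix m n ℝ) :
    (∀ N, f M ≤ f N) ↔ M = M₀ := by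
  have hf₀ : f M₀ = C := by simp [hf]
  constructor
  · intro hmin
    have hzero : ∑ i, ∑ j, (M i j - M₀ i j) ^ 2 = 0 := by
      have := hmin M₀
      rw [hf₀, hf] at this
      have : 0 ≤ ∑ i, ∑ j, (M i j - M₀ i j) ^ 2 := by positivity
      nlinarith
    refine Matrix.ext ?_
    simpa [Fintype.sum_eq_zero_iff_of_nonneg, Pi.le_def, sq_nonneg, Finset.sum_nonneg, funext_iff,
      sub_eq_zero] using hzero
  · rintro rfl N
    rw [hf₀, hf]
    have : 0 ≤ ∑ i, ∑ j, (N i j - M i j) ^ 2 := by positivity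
    nlinarith

theorem hadamard_to_matrix_product_optimal_general
    {Ω : Type*} [MeasureSpace Ω]
    (J K : ℕ) (hK : 0 < K)
    (Q : Matrix (Fin J) (Fin K) ℝ)
    (G : Ω → Matrix (Fin J) (Fin K) ℂ)
    (hmeas : ∀ (j : Fin J) (k : Fin K), Measurable (fun ω => G ω j k))
    (hindep : iIndepFun
      (fun p : Fin J × Fin K => fun ω => G ω p.1 p.2) volume)
    (hmean : ∀ (j : Fin J) (k : Fin K), ∫ ω, G ω j k = 0)
    (hvar : ∀ (j : Fin J) (k : Fin K), ∫ ω, ‖G ω j k‖ ^ 2 = 1)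
    (F : Matrix (Fin J) (Fin J) ℝ → ℝ)
    (hF : ∀ T : Matrix (Fin J) (Fin J) ℝ,
      F T = ∫ ω, ∑ j, ∑ k, ‖(Q j k : ℂ) * G ω j k - ∑ n, (T j n : ℂ) * G ω n k‖ ^ 2) :
    (∀ T : Matrix (Fin J) (Fin J) ℝ,
        (∀ S : Matrix (Fin J) (Fin J) ℝ, F T ≤ F S) ↔
          T = Matrix.diagonal (fun j => (1 / (K : ℝ)) * ∑ k, Q j k)) ∧
      F (Matrix.diagonal (fun j => (1 / (K : ℝ)) * ∑ k, Q j k))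
        = ∑ j, ((∑ k, (Q j k) ^ 2) - (1 / (K : ℝ)) * (∑ k, Q j k) ^ 2) := by
  have : Nonempty (Fin K) := ⟨⟨0, hK⟩⟩
  have hmem : ∀ j k, MemLp (fun ω => G ω j k) 2 := fun j k =>
    memLp_two_of_integral_norm_sq_ne_zero (hmeas j k).aestronglyMeasurable (by simp [hvar])
  have horth : ∀ k, Pairwise fun m n => ∫ ω, G ω m k * conj (G ω n k) = 0 := fun k m n hmn =>
    integral_mul_conj_eq_zero_of_indepFun
      (hindep.indepFun (i := (m, k)) (j := (n, k)) (by simp [hmn]))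
      (hmeas m k).aestronglyMeasurable (hmeas n k).aestronglyMeasurable (hmean m k)
  have hcol : ∀ T : Matrix (Fin J) (Fin J) ℝ, ∀ j k ω,
      (Q j k : ℂ) * G ω j k - ∑ n, (T j n : ℂ) * G ω n k
        = ∑ n, ((Matrix.diagonal (fun i => Q i k) j n - T j n : ℝ) : ℂ) * G ω n k := by
    intro T j k ω
    simp [Matrix.diagonal_apply, sub_mul, Finset.sum_sub_distrib, apply_ite Complex.ofReal, ite_mul]
  have hFT : ∀ T, F T = ∑ j, (∑ k, Q j k ^ 2 - (1 / (K : ℝ)) * (∑ k, Q j k) ^ 2)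
      + K * ∑ j, ∑ n, (T j n - Matrix.diagonal (fun j => (1 / (K : ℝ)) * ∑ k, Q j k) j n) ^ 2 := by
    intro T
    have hint : ∀ j k, Integrable fun ω =>
        ‖∑ n, ((Matrix.diagonal (fun i => Q i k) j n - T j n : ℝ) : ℂ) * G ω n k‖ ^ 2 :=
      fun j k => (memLp_finsetSum _ fun n _ => (hmem n k).const_mul _).integrable_norm_pow
        two_ne_zero
    simp_rw [hF, hcol, integral_finsetSum _ fun j _ => integrable_finsetSum _ fun k _ => hint j k,
      integral_finsetSum _ fun k _ => hint _ k,
      integral_norm_sq_sum_mul_of_orthonormal (fun n => hmem n _) (fun n => hvar n _) (horth _),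
      Complex.norm_real, Real.norm_eq_abs, sq_abs]
    simpa using sum_sq_diagonal_sub_eq Q T
  exact ⟨Matrix.forall_le_iff_eq_of_eq_add_mul_sum_sq (by positivity) hFT, by simp [hFT]⟩

/-- With `Δ(T̃) = Q∘G − T̃G` and `F(T̃) = E‖Δ(T̃)‖_F²`, where the entries of `G`
are i.i.d. complex random variables with mean zero and `E|g_{jk}|² = 1`, the functional `F`
attains its minimum over all real `J×J` matrices `T̃` if and only if `T̃` is the diagonal
matrix with `j`-th diagonal entry `(1/K)·∑_k q_{jk}`, and the minimum value is
`∑_j [ ∑_k q_{jk}² − (1/K)(∑_k q_{jk})² ]`. -/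
theorem hadamard_to_matrix_product_optimal
    {Ω : Type*} [MeasureSpace Ω] [IsProbabilityMeasure (volume : Measure Ω)]
    (J K : ℕ) (hJ : 0 < J) (hK : 0 < K)
    (Q : Matrix (Fin J) (Fin K) ℝ)
    (G : Ω → Matrix (Fin J) (Fin K) ℂ)
    (hmeas : ∀ (j : Fin J) (k : Fin K), Measurable (fun ω => G ω j k))
    (hindep : iIndepFun
      (fun p : Fin J × Fin K => fun ω => G ω p.1 p.2) volume)
    (hident : ∀ p q : Fin J × Fin K,
      IdentDistrib (fun ω => G ω p.1 p.2) (fun ω => G ω q.1 q.2) volume volume)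
    (hmean : ∀ (j : Fin J) (k : Fin K), ∫ ω, G ω j k = 0)
    (hvar : ∀ (j : Fin J) (k : Fin K), ∫ ω, ‖G ω j k‖ ^ 2 = 1)
    (F : Matrix (Fin J) (Fin J) ℝ → ℝ)
    (hF : ∀ T : Matrix (Fin J) (Fin J) ℝ,
      F T = ∫ ω, ∑ j, ∑ k, ‖(Q j k : ℂ) * G ω j k - ∑ n, (T j n : ℂ) * G ω n k‖ ^ 2) :
    (∀ T : Matrix (Fin J) (Fin J) ℝ,
        (∀ S : Matrix (Fin J) (Fin J) ℝ, F T ≤ F S) ↔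
          T = Matrix.diagonal (fun j => (1 / (K : ℝ)) * ∑ k, Q j k)) ∧
      F (Matrix.diagonal (fun j => (1 / (K : ℝ)) * ∑ k, Q j k))
        = ∑ j, ((∑ k, (Q j k) ^ 2) - (1 / (K : ℝ)) * (∑ k, Q j k) ^ 2) :=
  hadamard_to_matrix_product_optimal_general J K hK Q G hmeas hindep hmean hvar F hF
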